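/- Fix K > 0 and j ∈ {1,2,3}, and let c̃, s̃ be the ultradiscrete elliptic functions. For every v ∈ ℝ, the two identities c̃(u+v) = max(s̃(u), 2c̃(u)+c̃(v)+s̃(v)) − max(c̃(u)+2c̃(v), 2s̃(u)+s̃(v)) and s̃(u+v) = max(c̃(u)+s̃(u)+2s̃(v), c̃(v)) − max(c̃(u)+2c̃(v), 2s̃(u)+s̃(v)) hold for all u ∈ [(j−1)K, jK] if and only if (v − (j−1)K) mod 3K ∈ [0, 2K]. -/

import Mathlib

/-- The ultradiscrete elliptic function `c̃`. -/
noncomputable def ctilde (K u : ℝ) : ℝ :=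
  -(9 * K / 2) * (Int.fract ((u - K) / (3 * K)) - 1 / 2) ^ 2
    + (9 * K / 2) * (Int.fract (u / (3 * K)) - 1 / 2) ^ 2

/-- The ultradiscrete elliptic function `s̃`. -/
noncomputable def stilde (K u : ℝ) : ℝ :=
  -(9 * K / 2) * (Int.fract ((u - 2 * K) / (3 * K)) - 1 / 2) ^ 2
    + (9 * K / 2) * (Int.fract (u / (3 * K)) - 1 / 2) ^ 2

/-- The real number `x` reduced modulo `y`, i.e. `x − y⌊x/y⌋`. -/
noncomputable def rmod (x y : ℝ) : ℝ := x - y * ⌊x / y⌋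

/-!
Shifting by `K` acts linearly on the pair `(c̃, s̃)`: `c̃(x + K) = -s̃(x)` and
`s̃(x + K) = c̃(x) - s̃(x)`. Under `(u, v) ↦ (u + K, v + K)` the three maxima on the right-hand
sides of the addition formulas are permuted cyclically, each shifted by the same amount
`-2s̃(u) - 2s̃(v)`, so the right-hand sides transform exactly as `c̃, s̃` do under `x ↦ x + 2K`.
Hence the formulas hold at `(u, v)` iff they hold at `(u + K, v + K)`, and every `j` reduces to
`u ∈ [0, K]`. There the formulas are checked piece by piece for `v mod 3K ∈ [0, 2K]`, and
`u = K/2` is a counterexample for `v mod 3K ∈ (2K, 3K)`.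
-/

open Set

lemma fract_add_three_mul_div (x K : ℝ) :
    Int.fract ((x + 3 * K) / (3 * K)) = Int.fract (x / (3 * K)) := by
  rcases eq_or_ne K 0 with rfl | hK
  · simp
  · rw [add_div, div_self (by positivity), Int.fract_add_one]

lemma ctilde_add_K (K x : ℝ) : ctilde K (x + K) = -stilde K x := by
  unfold ctilde stilde
  rw [add_sub_cancel_right, show x + K = x - 2 * K + 3 * K by ring, fract_add_three_mul_div]
  ring

lemma stilde_add_K (K x : ℝ) : stilde K (x + K) = ctilde K x - stilde K x := by
  unfold ctilde stilde
  rw [show x + K - 2 * K = x - K by ring, show x + K = x - 2 * K + 3 * K by ring,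
    fract_add_three_mul_div]
  ring

lemma ctilde_add_two_mul_K (K x : ℝ) : ctilde K (x + 2 * K) = stilde K x - ctilde K x := by
  rw [two_mul, ← add_assoc, ctilde_add_K, stilde_add_K]
  ring

lemma stilde_add_two_mul_K (K x : ℝ) : stilde K (x + 2 * K) = -ctilde K x := by
  rw [two_mul, ← add_assoc, stilde_add_K, ctilde_add_K, stilde_add_K]
  ring

lemma ctilde_periodic (K : ℝ) : Function.Periodic (ctilde K) (3 * K) := fun x => by
  rw [show 3 * K = 2 * K + K by ring, ← add_assoc, ctilde_add_K, stilde_add_two_mul_K, neg_neg]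

lemma stilde_periodic (K : ℝ) : Function.Periodic (stilde K) (3 * K) := fun x => by
  rw [show 3 * K = 2 * K + K by ring, ← add_assoc, stilde_add_K, ctilde_add_two_mul_K,
    stilde_add_two_mul_K]
  ring

section Pieces

variable {K x : ℝ}

lemma sq_fract_sub_half {y : ℝ} (hy : y ∈ Icc 0 1) :
    (Int.fract y - 1 / 2) ^ 2 = (y - 1 / 2) ^ 2 := by
  rcases hy.2.lt_or_eq with hy1 | rfl
  · rw [Int.fract_eq_self.mpr ⟨hy.1, hy1⟩]
  · norm_num

lemma sq_fract_sub_half_of_nonpos {y : ℝ} (hy : y ∈ Icc (-1) 0) :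
    (Int.fract y - 1 / 2) ^ 2 = (y + 1 / 2) ^ 2 := by
  rw [← Int.fract_add_one, sq_fract_sub_half ⟨by linarith [hy.1], by linarith [hy.2]⟩]
  ring

lemma ctilde_of_mem_Icc_zero_K (hK : 0 < K) (hx : x ∈ Icc 0 K) : ctilde K x = K - 2 * x := by
  obtain ⟨hx0, hxK⟩ := hx
  unfold ctilde
  rw [sq_fract_sub_half (y := x / (3 * K))
      ⟨div_nonneg hx0 (by positivity), by rw [div_le_one (by positivity)]; linarith⟩,
    sq_fract_sub_half_of_nonpos ⟨by rw [le_div_iff₀ (by positivity)]; linarith,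
      div_nonpos_of_nonpos_of_nonneg (by linarith) (by positivity)⟩]
  field_simp
  ring

lemma stilde_of_mem_Icc_zero_two_K (hK : 0 < K) (hx : x ∈ Icc 0 (2 * K)) :
    stilde K x = K - x := by
  obtain ⟨hx0, hx2K⟩ := hx
  unfold stilde
  rw [sq_fract_sub_half (y := x / (3 * K))
      ⟨div_nonneg hx0 (by positivity), by rw [div_le_one (by positivity)]; linarith⟩,
    sq_fract_sub_half_of_nonpos ⟨by rw [le_div_iff₀ (by positivity)]; linarith,
      div_nonpos_of_nonpos_of_nonneg (by linarith) (by positivity)⟩]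
  field_simp
  ring

lemma ctilde_of_mem_Icc_K_three_K (hK : 0 < K) (hx : x ∈ Icc K (3 * K)) :
    ctilde K x = x - 2 * K := by
  obtain ⟨y, rfl⟩ : ∃ y, x = y + K := ⟨x - K, by ring⟩
  rw [ctilde_add_K, stilde_of_mem_Icc_zero_two_K hK ⟨by linarith [hx.1], by linarith [hx.2]⟩]
  ring

lemma stilde_of_mem_Icc_two_K_three_K (hK : 0 < K) (hx : x ∈ Icc (2 * K) (3 * K)) :
    stilde K x = 2 * x - 5 * K := by
  obtain ⟨y, rfl⟩ : ∃ y, x = y + 2 * K := ⟨x - 2 * K, by ring⟩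
  rw [stilde_add_two_mul_K, ctilde_of_mem_Icc_zero_K hK ⟨by linarith [hx.1], by linarith [hx.2]⟩]
  ring

lemma ctilde_of_mem_Icc_three_K_four_K (hK : 0 < K) (hx : x ∈ Icc (3 * K) (4 * K)) :
    ctilde K x = 7 * K - 2 * x := by
  obtain ⟨y, rfl⟩ : ∃ y, x = y + 3 * K := ⟨x - 3 * K, by ring⟩
  rw [ctilde_periodic, ctilde_of_mem_Icc_zero_K hK ⟨by linarith [hx.1], by linarith [hx.2]⟩]
  ring

end Pieces

noncomputable def ctildeAddNum (K u v : ℝ) : ℝ :=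
  max (stilde K u) (2 * ctilde K u + ctilde K v + stilde K v)

noncomputable def stildeAddNum (K u v : ℝ) : ℝ :=
  max (ctilde K u + stilde K u + 2 * stilde K v) (ctilde K v)

noncomputable def additionDenom (K u v : ℝ) : ℝ :=
  max (ctilde K u + 2 * ctilde K v) (2 * stilde K u + stilde K v)

noncomputable def ctildeAdd (K u v : ℝ) : ℝ := ctildeAddNum K u v - additionDenom K u v

noncomputable def stildeAdd (K u v : ℝ) : ℝ := stildeAddNum K u v - additionDenom K u v

def AdditionFormulas (K u v : ℝ) : Prop :=
  ctilde K (u + v) = ctildeAdd K u v ∧ stilde K (u + v) = stildeAdd K u v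

section DiagonalShift

variable (K u v : ℝ)

lemma ctildeAddNum_add_K :
    ctildeAddNum K (u + K) (v + K) = stildeAddNum K u v - 2 * stilde K u - 2 * stilde K v := by
  rw [ctildeAddNum, stildeAddNum, sub_sub, sub_eq_add_neg, ← max_add_add_right, ctilde_add_K,
    stilde_add_K, ctilde_add_K, stilde_add_K]
  congr 1 <;> ring

lemma stildeAddNum_add_K :
    stildeAddNum K (u + K) (v + K) = additionDenom K u v - 2 * stilde K u - 2 * stilde K v := by
  rw [stildeAddNum, additionDenom, sub_sub, sub_eq_add_neg, ← max_add_add_right, ctilde_add_K,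
    stilde_add_K, stilde_add_K, ctilde_add_K]
  congr 1 <;> ring

lemma additionDenom_add_K :
    additionDenom K (u + K) (v + K) = ctildeAddNum K u v - 2 * stilde K u - 2 * stilde K v := by
  rw [additionDenom, ctildeAddNum, sub_sub, sub_eq_add_neg, ← max_add_add_right, ctilde_add_K,
    stilde_add_K, ctilde_add_K, stilde_add_K]
  congr 1 <;> ring

lemma ctildeAdd_add_K : ctildeAdd K (u + K) (v + K) = stildeAdd K u v - ctildeAdd K u v := by
  rw [ctildeAdd, ctildeAddNum_add_K, additionDenom_add_K, stildeAdd, ctildeAdd]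
  ring

lemma stildeAdd_add_K : stildeAdd K (u + K) (v + K) = -ctildeAdd K u v := by
  rw [stildeAdd, stildeAddNum_add_K, additionDenom_add_K, ctildeAdd]
  ring

lemma additionFormulas_add_K_iff :
    AdditionFormulas K (u + K) (v + K) ↔ AdditionFormulas K u v := by
  rw [AdditionFormulas, AdditionFormulas, show u + K + (v + K) = u + v + 2 * K by ring,
    ctilde_add_two_mul_K, stilde_add_two_mul_K, ctildeAdd_add_K, stildeAdd_add_K]
  constructor <;> rintro ⟨h₁, h₂⟩ <;> constructor <;> linarith

lemma additionFormulas_add_periodic :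
    Function.Periodic (fun t => AdditionFormulas K (u + t) (v + t)) K := fun t => by
  simp only [← add_assoc]
  exact propext (additionFormulas_add_K_iff K (u + t) (v + t))

end DiagonalShift

lemma additionFormulas_periodic (K u : ℝ) :
    Function.Periodic (AdditionFormulas K u) (3 * K) := fun v => by
  simp only [AdditionFormulas, ctildeAdd, stildeAdd, ctildeAddNum, stildeAddNum, additionDenom,
    ← add_assoc, ctilde_periodic K _, stilde_periodic K _]

section FirstQuarter

variable {K u v : ℝ}

lemma additionFormulas_of_mem_Icc (hK : 0 < K) (hu : u ∈ Icc 0 K) (hv : v ∈ Icc 0 (2 * K)) :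
    AdditionFormulas K u v := by
  obtain ⟨hu0, huK⟩ := hu
  obtain ⟨hv0, hv2K⟩ := hv
  rw [AdditionFormulas, ctildeAdd, stildeAdd, ctildeAddNum, stildeAddNum, additionDenom,
    ctilde_of_mem_Icc_zero_K hK ⟨hu0, huK⟩, stilde_of_mem_Icc_zero_two_K hK ⟨hu0, by linarith⟩,
    stilde_of_mem_Icc_zero_two_K hK ⟨hv0, hv2K⟩]
  rcases le_total v K with hvK | hKv
  · rw [ctilde_of_mem_Icc_zero_K hK ⟨hv0, hvK⟩,
      stilde_of_mem_Icc_zero_two_K hK ⟨by linarith, by linarith⟩]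
    rcases le_total (u + v) K with hs | hs
    · rw [ctilde_of_mem_Icc_zero_K hK ⟨by linarith, hs⟩]
      constructor <;> (simp only [max_def]; split_ifs <;> linarith)
    · rw [ctilde_of_mem_Icc_K_three_K hK ⟨hs, by linarith⟩]
      constructor <;> (simp only [max_def]; split_ifs <;> linarith)
  · rw [ctilde_of_mem_Icc_K_three_K hK ⟨hKv, by linarith⟩,
      ctilde_of_mem_Icc_K_three_K hK ⟨by linarith, by linarith⟩]
    rcases le_total (u + v) (2 * K) with hs | hs
    · rw [stilde_of_mem_Icc_zero_two_K hK ⟨by linarith, hs⟩]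
      constructor <;> (simp only [max_def]; split_ifs <;> linarith)
    · rw [stilde_of_mem_Icc_two_K_three_K hK ⟨hs, by linarith⟩]
      constructor <;> (simp only [max_def]; split_ifs <;> linarith)

lemma not_additionFormulas_half (hK : 0 < K) (hv : v ∈ Ioo (2 * K) (3 * K)) :
    ¬ AdditionFormulas K (K / 2) v := by
  obtain ⟨hv2K, hv3K⟩ := hv
  rintro ⟨h, -⟩
  rw [ctildeAdd, ctildeAddNum, additionDenom,
    ctilde_of_mem_Icc_zero_K (x := K / 2) hK ⟨by linarith, by linarith⟩,
    stilde_of_mem_Icc_zero_two_K (x := K / 2) hK ⟨by linarith, by linarith⟩,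
    ctilde_of_mem_Icc_K_three_K (x := v) hK ⟨by linarith, hv3K.le⟩,
    stilde_of_mem_Icc_two_K_three_K hK ⟨hv2K.le, hv3K.le⟩] at h
  rcases le_total (K / 2 + v) (3 * K) with hs | hs
  · rw [ctilde_of_mem_Icc_K_three_K hK ⟨by linarith, hs⟩] at h
    simp only [max_def] at h
    split_ifs at h <;> linarith
  · rw [ctilde_of_mem_Icc_three_K_four_K hK ⟨hs, by linarith⟩] at h
    simp only [max_def] at h
    split_ifs at h <;> linarith

end FirstQuarter

lemma rmod_eq_fract_div_mul (x : ℝ) {y : ℝ} (hy : y ≠ 0) : rmod x y = Int.fract (x / y) * y := by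
  rw [rmod, ← Int.self_sub_floor, sub_mul, div_mul_cancel₀ x hy, mul_comm]

theorem forall_additionFormulas_Icc_zero_iff {K : ℝ} (hK : 0 < K) (v : ℝ) :
    (∀ u ∈ Icc 0 K, AdditionFormulas K u v) ↔ rmod v (3 * K) ∈ Icc 0 (2 * K) := by
  have h3K : 0 < 3 * K := by positivity
  obtain ⟨hr0, hr3K⟩ := rmod_eq_fract_div_mul v h3K.ne' ▸ Int.fract_div_mul_self_mem_Ico _ v h3K
  have hper (u : ℝ) : AdditionFormulas K u v ↔ AdditionFormulas K u (rmod v (3 * K)) := by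
    rw [rmod, mul_comm, (additionFormulas_periodic K u).sub_int_mul_eq]
  simp only [hper]
  refine ⟨fun h => ⟨hr0, ?_⟩, fun hr u hu => additionFormulas_of_mem_Icc hK hu hr⟩
  by_contra! hr
  exact not_additionFormulas_half hK ⟨hr, hr3K⟩ (h (K / 2) ⟨by positivity, by linarith⟩)

theorem forall_additionFormulas_Icc_iff {K : ℝ} (hK : 0 < K) (n : ℤ) (v : ℝ) :
    (∀ u ∈ Icc (n * K) (n * K + K), AdditionFormulas K u v) ↔
      rmod (v - n * K) (3 * K) ∈ Icc 0 (2 * K) := by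
  have hIcc : Icc (n * K) (n * K + K) = (· + n * K) '' Icc 0 K := by
    rw [image_add_const_Icc, zero_add, add_comm]
  rw [← forall_additionFormulas_Icc_zero_iff hK, hIcc, forall_mem_image]
  refine forall₂_congr fun u _ => ?_
  simpa using (additionFormulas_add_periodic K u (v - n * K)).int_mul_eq n

theorem ultradiscrete_addition_first_pair_general (K : ℝ) (hK : 0 < K)
    (j : ℕ) (v : ℝ) :
    (∀ u ∈ Set.Icc (((j : ℝ) - 1) * K) ((j : ℝ) * K),
      ctilde K (u + v) =
        max (stilde K u) (2 * ctilde K u + ctilde K v + stilde K v)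
          - max (ctilde K u + 2 * ctilde K v) (2 * stilde K u + stilde K v) ∧
      stilde K (u + v) =
        max (ctilde K u + stilde K u + 2 * stilde K v) (ctilde K v)
          - max (ctilde K u + 2 * ctilde K v) (2 * stilde K u + stilde K v))
    ↔ rmod (v - ((j : ℝ) - 1) * K) (3 * K) ∈ Set.Icc 0 (2 * K) := by
  have h := forall_additionFormulas_Icc_iff hK ((j : ℤ) - 1) v
  push_cast at h
  rwa [show (j : ℝ) * K = ((j : ℝ) - 1) * K + K by ring]

/-- First pair of ultradiscrete addition formulae: valid on `[(j−1)K, jK]`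
exactly when `v` lies in the closure of `D_j ∪ D_{j+1}` modulo `3K`. -/
theorem ultradiscrete_addition_first_pair (K : ℝ) (hK : 0 < K)
    (j : ℕ) (hj : j = 1 ∨ j = 2 ∨ j = 3) (v : ℝ) :
    (∀ u ∈ Set.Icc (((j : ℝ) - 1) * K) ((j : ℝ) * K),
      ctilde K (u + v) =
        max (stilde K u) (2 * ctilde K u + ctilde K v + stilde K v)
          - max (ctilde K u + 2 * ctilde K v) (2 * stilde K u + stilde K v) ∧
      stilde K (u + v) =
        max (ctilde K u + stilde K u + 2 * stilde K v) (ctilde K v)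
          - max (ctilde K u + 2 * ctilde K v) (2 * stilde K u + stilde K v))
    ↔ rmod (v - ((j : ℝ) - 1) * K) (3 * K) ∈ Set.Icc 0 (2 * K) :=
  ultradiscrete_addition_first_pair_general K hK j v
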